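/- arXiv:1308.4540 — 5 statements merged into one kernel-verified Lean document; each statement's English description precedes it below -/
import Mathlib

section
/- Let $(X,\sigma)$ be a zero-dimensional Polish space, $(H_n)_{n\in\omega}$ a pairwise disjoint family of subsets of $X$, and $(\sigma_n)_{n\in\omega}$ a sequence of topologies with $\sigma_0 = \sigma$, $H_0$ closed in $\sigma_0$, and inductively $\sigma_{n+1} = \langle \sigma_n \cup \{H_n\}\rangle$ with $H_{n+1}$ closed in $\sigma_{n+1}$. Let $\sigma_\infty = \langle \bigcup_n \sigma_n\rangle$. Then: (a) $\sigma_\infty$ is zero-dimensional Polish; (b) $\sigma_\infty$ restricted to $X \setminus \bigcup_n H_n$ equals $\sigma$ restricted to that set; (c) for every $n$, $\sigma_\infty$ restricted to $H_n$ equals $\sigma$ restricted to $H_n$; (d) every $H_n$ is $\sigma_\infty$-clopen. -/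
/-!
Adjoining a closed set `s` to a topology `t` as a new open set gives `t ⊓ generateFrom {s}`.
This does not change the subspace topology on subsets of `s` or of `sᶜ`, and it is the
topology of the sum `s ⊕ sᶜ`, hence Polish when `t` is. A topology generated by clopen sets
is zero-dimensional, which covers both one step and the infimum of all steps; the infimum of
the decreasing sequence of Polish topologies is Polish by `PolishSpace.iInf`.
-/

open TopologicalSpace Set Topology

section AdjoinOpen

variable {X : Type*}

lemma IsClopen.mono {t₁ t₂ : TopologicalSpace X} {s : Set X} (hs : @IsClopen X t₂ s)
    (h : t₁ ≤ t₂) : @IsClopen X t₁ s :=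
  ⟨hs.1.mono h, hs.2.mono h⟩

abbrev adjoinOpen (t : TopologicalSpace X) (s : Set X) : TopologicalSpace X :=
  generateFrom ({u | IsOpen[t] u} ∪ {s})

lemma adjoinOpen_eq_inf (t : TopologicalSpace X) (s : Set X) :
    adjoinOpen t s = t ⊓ generateFrom {s} := by
  rw [adjoinOpen, generateFrom_union, generateFrom_setOfPred_isOpen]

lemma adjoinOpen_le (t : TopologicalSpace X) (s : Set X) : adjoinOpen t s ≤ t := by
  rw [adjoinOpen_eq_inf]
  exact inf_le_left

lemma isClopen_adjoinOpen {t : TopologicalSpace X} {s : Set X} (hs : IsClosed[t] s) :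
    @IsClopen X (adjoinOpen t s) s :=
  ⟨hs.mono (adjoinOpen_le t s), isOpen_generateFrom_of_mem (Or.inr rfl)⟩

lemma induced_generateFrom_singleton_eq_top {S s : Set X} (h : S ⊆ s ∨ Disjoint S s) :
    induced ((↑) : S → X) (generateFrom {s}) = ⊤ := by
  rw [induced_generateFrom_eq, image_singleton, eq_top_iff]
  refine le_generateFrom fun u hu => (isOpen_top_iff u).2 ?_
  rw [mem_singleton_iff.1 hu]
  rcases h with h | h
  · exact Or.inr (preimage_eq_univ_iff.2 (by simpa using h))
  · exact Or.inl (by simpa [preimage_eq_empty_iff] using h.symm)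

lemma induced_adjoinOpen (t : TopologicalSpace X) {S s : Set X} (h : S ⊆ s ∨ Disjoint S s) :
    induced ((↑) : S → X) (adjoinOpen t s) = induced ((↑) : S → X) t := by
  rw [adjoinOpen_eq_inf, induced_inf, induced_generateFrom_singleton_eq_top h, inf_top_eq]

lemma isOpen_adjoinOpen_of_isOpen_preimage_val [t : TopologicalSpace X] {s W : Set X}
    (hs : IsClosed s) (hWs : IsOpen ((↑) ⁻¹' W : Set s)) (hWsc : IsOpen ((↑) ⁻¹' W : Set ↥sᶜ)) :
    IsOpen[adjoinOpen t s] W := by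
  obtain ⟨u, hu, hus⟩ := isOpen_induced_iff.1 hWs
  obtain ⟨v, hv, hvs⟩ := isOpen_induced_iff.1 hWsc
  rw [Subtype.preimage_coe_eq_preimage_coe_iff] at hus hvs
  have hW : W = s ∩ u ∪ sᶜ ∩ v := by
    rw [hus, hvs, ← union_inter_distrib_right, union_compl_self, univ_inter]
  rw [hW]
  have hle := adjoinOpen_le t s
  let := adjoinOpen t s
  exact ((isClopen_adjoinOpen hs).isOpen.inter (hu.mono hle)).union
    ((hs.isOpen_compl.mono hle).inter (hv.mono hle))

lemma polishSpace_adjoinOpen [t : TopologicalSpace X] [PolishSpace X] {s : Set X}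
    (hs : IsClosed s) : @PolishSpace X (adjoinOpen t s) := by
  classical
  have : PolishSpace s := hs.polishSpace
  have : PolishSpace ↥sᶜ := hs.isOpen_compl.polishSpace
  let f : s ⊕ ↥sᶜ ≃ X := Equiv.Set.sumCompl s
  have hf : adjoinOpen t s = .coinduced f instTopologicalSpaceSum := by
    refine le_antisymm (fun W hW => ?_) (le_generateFrom ?_)
    · rw [isOpen_coinduced, isOpen_sum_iff] at hW
      exact isOpen_adjoinOpen_of_isOpen_preimage_val hs
        (by simpa [preimage_preimage, f] using hW.1) (by simpa [preimage_preimage, f] using hW.2)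
    · rintro u (hu | rfl) <;> rw [isOpen_coinduced, isOpen_sum_iff]
      · simpa [preimage_preimage, f] using
          ⟨hu.preimage continuous_subtype_val, hu.preimage continuous_subtype_val⟩
      · simp [preimage_preimage, f]
  rw [hf, ← f.induced_symm]
  exact f.symm.polishSpace_induced

lemma isTopologicalBasis_isClopen_of_eq_generateFrom [t : TopologicalSpace X]
    {g : Set (Set X)} (ht : t = generateFrom g) (hg : ∀ u ∈ g, IsClopen u) :
    IsTopologicalBasis {u : Set X | IsClopen u} := by
  refine (isTopologicalBasis_of_subbasis ht).of_isOpen_of_subset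
    (fun u (hu : IsClopen u) => hu.isOpen) ?_
  rintro _ ⟨F, ⟨hF, hFg⟩, rfl⟩
  show IsClopen (⋂₀ F)
  rw [sInter_eq_biInter]
  exact hF.isClopen_biInter fun u hu => hg u (hFg hu)

lemma isTopologicalBasis_isClopen_iInf {ι : Sort*} {t : ι → TopologicalSpace X}
    (ht : ∀ i, @IsTopologicalBasis X (t i) {u | @IsClopen X (t i) u}) :
    @IsTopologicalBasis X (⨅ i, t i) {u | @IsClopen X (⨅ i, t i) u} := by
  have hgen : ⨅ i, t i = generateFrom (⋃ i, {u | @IsClopen X (t i) u}) := by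
    rw [generateFrom_iUnion]
    exact iInf_congr fun i => @IsTopologicalBasis.eq_generateFrom _ (t i) _ (ht i)
  refine @isTopologicalBasis_isClopen_of_eq_generateFrom X (⨅ i, t i) _ hgen ?_
  simp only [mem_iUnion]
  rintro u ⟨i, hu⟩
  exact hu.mono (iInf_le t i)

lemma isTopologicalBasis_isClopen_adjoinOpen [t : TopologicalSpace X]
    (ht : IsTopologicalBasis {u : Set X | IsClopen u}) {s : Set X} (hs : IsClosed s) :
    @IsTopologicalBasis X (adjoinOpen t s) {u | @IsClopen X (adjoinOpen t s) u} := by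
  refine @isTopologicalBasis_isClopen_of_eq_generateFrom X (adjoinOpen t s)
    ({u | IsClopen u} ∪ {s}) ?_ ?_
  · rw [adjoinOpen_eq_inf, generateFrom_union, ← ht.eq_generateFrom]
  · rintro u (hu | rfl)
    · exact hu.mono (adjoinOpen_le t s)
    · exact isClopen_adjoinOpen hs

lemma induced_iInf_of_succ_eq_adjoinOpen {ts : ℕ → TopologicalSpace X} {H : ℕ → Set X}
    (hsucc : ∀ n, ts (n + 1) = adjoinOpen (ts n) (H n)) {S : Set X}
    (hS : ∀ n, S ⊆ H n ∨ Disjoint S (H n)) :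
    induced ((↑) : S → X) (⨅ n, ts n) = induced ((↑) : S → X) (ts 0) := by
  have h : ∀ n, induced ((↑) : S → X) (ts n) = induced ((↑) : S → X) (ts 0) := by
    intro n
    induction n with
    | zero => rfl
    | succ n ih => rw [hsucc n, induced_adjoinOpen _ (hS n), ih]
  simp [induced_iInf, h]

end AdjoinOpen

/-- Lemma 2.4: adding countably many successively closed sets from a disjoint family to a
zero-dimensional Polish topology yields a zero-dimensional Polish topology that agrees with
the original one on each `H n` and outside `⋃ n, H n`, and makes each `H n` clopen. -/
theorem add_disjoint_closed_sets (X : Type*) (σ : TopologicalSpace X)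
    (hσpolish : @PolishSpace X σ)
    (hσzdim : @IsTopologicalBasis X σ {s | @IsClopen X σ s})
    (H : ℕ → Set X) (hdisj : Pairwise (Function.onFun Disjoint H))
    (σs : ℕ → TopologicalSpace X)
    (h0 : σs 0 = σ)
    (hsucc : ∀ n, σs (n + 1) = generateFrom ({s | @IsOpen X (σs n) s} ∪ {H n}))
    (hHclosed : ∀ n, @IsClosed X (σs n) (H n)) :
    letI σinf : TopologicalSpace X := ⨅ n, σs n
    (@PolishSpace X σinf ∧ @IsTopologicalBasis X σinf {s | @IsClopen X σinf s}) ∧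
    (TopologicalSpace.induced (Subtype.val : ((⋃ n, H n)ᶜ : Set X) → X) σinf =
      TopologicalSpace.induced (Subtype.val : ((⋃ n, H n)ᶜ : Set X) → X) σ) ∧
    (∀ n, TopologicalSpace.induced (Subtype.val : (H n) → X) σinf =
      TopologicalSpace.induced (Subtype.val : (H n) → X) σ) ∧
    (∀ n, @IsClopen X σinf (H n)) := by
  have hanti : Antitone σs :=
    antitone_nat_of_succ_le fun n => (hsucc n).trans_le (adjoinOpen_le _ _)
  have hσs : ∀ n, @PolishSpace X (σs n) ∧
      @IsTopologicalBasis X (σs n) {u | @IsClopen X (σs n) u} := by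
    intro n
    induction n with
    | zero => exact h0 ▸ ⟨hσpolish, hσzdim⟩
    | succ n ih =>
      rw [hsucc n]
      exact ⟨@polishSpace_adjoinOpen X (σs n) ih.1 _ (hHclosed n),
        @isTopologicalBasis_isClopen_adjoinOpen X (σs n) ih.2 _ (hHclosed n)⟩
  refine ⟨⟨PolishSpace.iInf ⟨0, fun n => hanti n.zero_le⟩ fun n => (hσs n).1,
      isTopologicalBasis_isClopen_iInf fun n => (hσs n).2⟩, ?_, fun m => ?_, fun n => ?_⟩
  · rw [← h0]
    exact induced_iInf_of_succ_eq_adjoinOpen hsucc fun n =>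
      Or.inr (disjoint_compl_left.mono_right (subset_iUnion H n))
  · rw [← h0]
    refine induced_iInf_of_succ_eq_adjoinOpen hsucc fun n => ?_
    rcases eq_or_ne n m with rfl | hne
    · exact Or.inl subset_rfl
    · exact Or.inr (hdisj hne.symm)
  · have hclopen : @IsClopen X (σs (n + 1)) (H n) := hsucc n ▸ isClopen_adjoinOpen (hHclosed n)
    exact hclopen.mono (iInf_le σs (n + 1))
end

section
/- Under the hypotheses of the previous lemma (disjoint $(H_n)$, topologies $\sigma_n$ with $\sigma_{n+1} = \langle \sigma_n \cup \{H_n\}\rangle$ and each $H_n$ $\sigma_n$-closed, $\sigma_\infty = \langle \bigcup_n \sigma_n \rangle$), a set $G \subseteq X$ is $\sigma_\infty$-open if and only if $G$ can be written as $G = G' \cup \bigcup_{n\in\omega} (G_n \cap H_n)$ where $G'$ and all $G_n$ are $\sigma$-open. -/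
open TopologicalSpace Topology

section Aux

variable {X : Type*}

def formOpen (σ : TopologicalSpace X) (H : ℕ → Set X) (G : Set X) : Prop :=
  ∃ (G' : Set X) (Gs : ℕ → Set X), IsOpen[σ] G' ∧ (∀ n, IsOpen[σ] (Gs n)) ∧
    G = G' ∪ ⋃ n, Gs n ∩ H n

lemma formOpen_of_isOpen (σ : TopologicalSpace X) (H : ℕ → Set X) {U : Set X}
    (hU : IsOpen[σ] U) : formOpen σ H U :=
  ⟨U, fun _ => ∅, hU, fun _ => @isOpen_empty _ σ, by simp⟩

lemma inter_form (H : ℕ → Set X) (hdisj : Pairwise (Function.onFun Disjoint H))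
    (A C : Set X) (B D : ℕ → Set X) :
    (A ∪ ⋃ n, B n ∩ H n) ∩ (C ∪ ⋃ n, D n ∩ H n)
      = (A ∩ C) ∪ ⋃ n, ((A ∩ D n) ∪ (C ∩ B n) ∪ (B n ∩ D n)) ∩ H n := by
  ext x
  simp only [Set.mem_inter_iff, Set.mem_union, Set.mem_iUnion]
  constructor
  · rintro ⟨hA | ⟨n, hBn, hHn⟩, hC | ⟨m, hDm, hHm⟩⟩
    · exact Or.inl ⟨hA, hC⟩
    · exact Or.inr ⟨m, Or.inl (Or.inl ⟨hA, hDm⟩), hHm⟩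
    · exact Or.inr ⟨n, Or.inl (Or.inr ⟨hC, hBn⟩), hHn⟩
    · have hnm : n = m := by
        by_contra h
        exact Set.disjoint_left.1 (hdisj h) hHn hHm
      subst hnm
      exact Or.inr ⟨n, Or.inr ⟨hBn, hDm⟩, hHn⟩
  · rintro (⟨hA, hC⟩ | ⟨n, (⟨hA, hD⟩ | ⟨hC, hB⟩) | ⟨hB, hD⟩, hH⟩)
    · exact ⟨Or.inl hA, Or.inl hC⟩
    · exact ⟨Or.inl hA, Or.inr ⟨n, hD, hH⟩⟩
    · exact ⟨Or.inr ⟨n, hB, hH⟩, Or.inl hC⟩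
    · exact ⟨Or.inr ⟨n, hB, hH⟩, Or.inr ⟨n, hD, hH⟩⟩

def tauForm (σ : TopologicalSpace X) (H : ℕ → Set X)
    (hdisj : Pairwise (Function.onFun Disjoint H)) : TopologicalSpace X where
  IsOpen := formOpen σ H
  isOpen_univ := formOpen_of_isOpen σ H (@isOpen_univ _ σ)
  isOpen_inter := by
    rintro s t ⟨A, B, hA, hB, rfl⟩ ⟨C, D, hC, hD, rfl⟩
    refine ⟨A ∩ C, fun n => (A ∩ D n) ∪ (C ∩ B n) ∪ (B n ∩ D n),
      hA.inter hC, fun n => (((hA.inter (hD n)).union ((hC.inter (hB n)))).union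
        ((hB n).inter (hD n))), inter_form H hdisj A C B D⟩
  isOpen_sUnion := by
    intro S hS
    simp only [formOpen] at hS
    choose f g hf hg heq using hS
    refine ⟨⋃ t, ⋃ h : t ∈ S, f t h, fun n => ⋃ t, ⋃ h : t ∈ S, g t h n,
      isOpen_iUnion fun t => isOpen_iUnion fun h => hf t h,
      fun n => isOpen_iUnion fun t => isOpen_iUnion fun h => hg t h n, ?_⟩
    ext x
    simp only [Set.mem_sUnion, Set.mem_union, Set.mem_iUnion, Set.mem_inter_iff]
    constructor
    · rintro ⟨t, ht, hx⟩
      rw [heq t ht] at hx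
      rcases hx with hx | hx
      · exact Or.inl ⟨t, ht, hx⟩
      · obtain ⟨n, hn, hH⟩ := Set.mem_iUnion.1 hx
        exact Or.inr ⟨n, ⟨t, ht, hn⟩, hH⟩
    · rintro (⟨t, ht, hx⟩ | ⟨n, ⟨t, ht, hx⟩, hH⟩)
      · exact ⟨t, ht, (heq t ht) ▸ Or.inl hx⟩
      · exact ⟨t, ht, (heq t ht) ▸ Or.inr (Set.mem_iUnion.2 ⟨n, hx, hH⟩)⟩

lemma formOpen_H (σ : TopologicalSpace X) (H : ℕ → Set X) (n : ℕ) :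
    formOpen σ H (H n) := by
  refine ⟨∅, fun k => if k = n then Set.univ else ∅, @isOpen_empty _ σ, fun k => ?_, ?_⟩
  · dsimp only
    split_ifs
    · exact @isOpen_univ _ σ
    · exact @isOpen_empty _ σ
  · apply Set.Subset.antisymm
    · intro x hx
      refine Or.inr (Set.mem_iUnion.2 ⟨n, ?_⟩)
      simp [hx]
    · rintro x (hx | hx)
      · exact absurd hx (Set.notMem_empty x)
      · simp only [Set.mem_iUnion, Set.mem_inter_iff] at hx
        obtain ⟨k, h1, h2⟩ := hx
        rcases eq_or_ne k n with rfl | h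
        · exact h2
        · rw [if_neg h] at h1
          exact absurd h1 (Set.notMem_empty x)

end Aux

/-- The claim in Lemma 2.4: under the same hypotheses, a set `G` is open in the
generated topology `σ∞` iff `G = G' ∪ ⋃ n, (G n ∩ H n)` with `G'` and all `G n` `σ`-open. -/
theorem open_in_refined_topology_iff (X : Type*) (σ : TopologicalSpace X)
    (hσpolish : @PolishSpace X σ)
    (hσzdim : @IsTopologicalBasis X σ {s | @IsClopen X σ s})
    (H : ℕ → Set X) (hdisj : Pairwise (Function.onFun Disjoint H))
    (σs : ℕ → TopologicalSpace X)
    (h0 : σs 0 = σ)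
    (hsucc : ∀ n, σs (n + 1) = generateFrom ({s | @IsOpen X (σs n) s} ∪ {H n}))
    (hHclosed : ∀ n, @IsClosed X (σs n) (H n))
    (G : Set X) :
    @IsOpen X (⨅ n, σs n) G ↔
      ∃ (G' : Set X) (Gs : ℕ → Set X), @IsOpen X σ G' ∧ (∀ n, @IsOpen X σ (Gs n)) ∧
        G = G' ∪ ⋃ n, Gs n ∩ H n := by
  -- each σs n is finer than σ
  have hle : ∀ n, σs n ≤ σ := by
    intro n
    induction n with
    | zero => exact h0.le
    | succ n ih =>
      rw [hsucc n]
      calc generateFrom ({s | IsOpen[σs n] s} ∪ {H n})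
          ≤ generateFrom {s | IsOpen[σs n] s} :=
            generateFrom_anti Set.subset_union_left
        _ = σs n := generateFrom_setOf_isOpen (σs n)
        _ ≤ σ := ih
  -- τ is finer than each σs n, i.e. every σs n-open set has the required form
  have htau : ∀ n, tauForm σ H hdisj ≤ σs n := by
    intro n
    induction n with
    | zero =>
      rw [h0]
      conv_rhs => rw [← generateFrom_setOf_isOpen σ]
      exact le_generateFrom fun s hs => formOpen_of_isOpen σ H hs
    | succ n ih =>
      rw [hsucc n]
      refine le_generateFrom ?_
      rintro s (hs | hs)
      · exact IsOpen.mono hs ih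
      · rw [Set.mem_singleton_iff.1 hs]
        exact formOpen_H σ H n
  have h1 : tauForm σ H hdisj ≤ ⨅ n, σs n := le_iInf htau
  have h2 : (⨅ n, σs n) ≤ tauForm σ H hdisj := by
    refine TopologicalSpace.le_def.2 ?_
    rintro s ⟨G', Gs, hG', hGs, rfl⟩
    have hG'0 : IsOpen[σs 0] G' := by rw [h0]; exact hG'
    have hG'o : IsOpen[⨅ n, σs n] G' := IsOpen.mono hG'0 (iInf_le σs 0)
    have hGH : ∀ n, IsOpen[⨅ n, σs n] (Gs n ∩ H n) := by
      intro n
      have h1 : IsOpen[σs (n + 1)] (Gs n ∩ H n) := by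
        rw [hsucc n]
        letI := generateFrom ({s | IsOpen[σs n] s} ∪ {H n})
        exact IsOpen.inter
          (TopologicalSpace.isOpen_generateFrom_of_mem
            (Or.inl (IsOpen.mono (hGs n) (hle n))))
          (TopologicalSpace.isOpen_generateFrom_of_mem (Or.inr rfl))
      exact IsOpen.mono h1 (iInf_le σs (n + 1))
    letI := ⨅ n, σs n
    exact IsOpen.union hG'o (isOpen_iUnion hGH)
  have heq : (⨅ n, σs n) = tauForm σ H hdisj := le_antisymm h2 h1
  rw [heq]
  exact Iff.rfl
end

section
/- For every $n \in \omega$ and $i < n$, $t_n(i) < n - i$, where $t_n = \psi(n)0^{n-|\psi(n)|}$ and $\psi$ is the bijection $\omega \to \omega^{<\omega}$ induced by the prime coding. -/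
/-- The prime coding of finite sequences. -/
noncomputable def primeCode (s : List ℕ) : ℕ :=
  ∏ j ∈ Finset.range s.length, (Nat.nth Nat.Prime j) ^ (s.getD j 0 + 1)

/-- `ψ = (i ∘ I)⁻¹ : ω → ω^{<ω}` where `i` is the increasing bijection from the range of
the prime coding `I` onto `ω`. -/
noncomputable def psi (n : ℕ) : List ℕ :=
  Function.invFun primeCode (Nat.nth (fun k => k ∈ Set.range primeCode) n)

/-- `t_n := ψ(n)0^{n-|ψ(n)|}`, a sequence of length `n`. -/
noncomputable def tseq (n : ℕ) : List ℕ :=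
  psi n ++ List.replicate (n - (psi n).length) 0

/-! Rank lists by the position of their code among all codes, so that `psi n` has rank `n`.
Appending an entry to `s`, or decreasing one of its entries, decreases the code and hence the
rank. The first gives `s.length ≤ rank s`; with the second, induction on `s i` gives
`s i + i < rank s`, which is the claim. -/

lemma primeCode_append_singleton (s : List ℕ) (a : ℕ) :
    primeCode (s ++ [a]) = primeCode s * Nat.nth Nat.Prime s.length ^ (a + 1) := by
  rw [primeCode, List.length_append, List.length_singleton, Finset.prod_range_succ,
    List.getD_append_right _ _ _ _ le_rfl, Nat.sub_self, List.getD_cons_zero]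
  congr 1
  refine Finset.prod_congr rfl fun j hj => ?_
  rw [List.getD_append _ _ _ _ (Finset.mem_range.1 hj)]

lemma primeCode_lt_append_singleton (s : List ℕ) (a : ℕ) :
    primeCode s < primeCode (s ++ [a]) := by
  rw [primeCode_append_singleton]
  refine lt_mul_of_one_lt_right ?_ (Nat.one_lt_pow a.succ_ne_zero (Nat.prime_nth_prime _).one_lt)
  exact Finset.prod_pos fun j _ => pow_pos (Nat.prime_nth_prime j).pos _

lemma primeCode_set_lt {s : List ℕ} {i v : ℕ} (hi : i < s.length) (hv : v < s.getD i 0) :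
    primeCode (s.set i v) < primeCode s := by
  rw [primeCode, primeCode, List.length_set]
  refine Finset.prod_lt_prod (fun j _ => pow_pos (Nat.prime_nth_prime j).pos _) (fun j _ => ?_)
    ⟨i, Finset.mem_range.2 hi, ?_⟩
  · refine Nat.pow_le_pow_right (Nat.prime_nth_prime j).pos (Nat.succ_le_succ ?_)
    rcases eq_or_ne i j with rfl | hij
    · simpa [List.getD_eq_getElem?_getD, hi] using hv.le
    · simp [List.getD_eq_getElem?_getD, List.getElem?_set_ne hij]
  · refine Nat.pow_lt_pow_right (Nat.prime_nth_prime i).one_lt (Nat.succ_lt_succ ?_)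
    simpa [List.getD_eq_getElem?_getD, hi] using hv

lemma infinite_range_primeCode : (Set.range primeCode).Infinite :=
  Set.infinite_of_forall_exists_gt fun a => ⟨primeCode [a], Set.mem_range_self _, by
    simpa [primeCode] using Nat.lt_pow_self (n := a + 1) one_lt_two |>.trans' a.lt_succ_self⟩

open scoped Classical in
/-- `i (I s)` in the paper's notation: the number of codes below `primeCode s`. -/
noncomputable def primeCodeRank (s : List ℕ) : ℕ :=
  Nat.count (· ∈ Set.range primeCode) (primeCode s)

lemma primeCodeRank_lt_of_primeCode_lt {s t : List ℕ} (h : primeCode s < primeCode t) :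
    primeCodeRank s < primeCodeRank t := by
  classical exact Nat.count_strict_mono (Set.mem_range_self s) h

lemma length_le_primeCodeRank (s : List ℕ) : s.length ≤ primeCodeRank s := by
  induction s using List.reverseRecOn with
  | nil => exact Nat.zero_le _
  | append_singleton s a ih =>
    rw [List.length_append, List.length_singleton]
    exact ih.trans_lt (primeCodeRank_lt_of_primeCode_lt (primeCode_lt_append_singleton s a))

lemma getD_add_lt_primeCodeRank {s : List ℕ} {i : ℕ} (hi : i < s.length) :
    s.getD i 0 + i < primeCodeRank s := by
  generalize hk : s.getD i 0 = k
  induction k generalizing s with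
  | zero => exact (length_le_primeCodeRank s).trans_lt' (by omega)
  | succ k ih =>
    have hset : (s.set i k).getD i 0 = k := by
      simp [List.getD_eq_getElem?_getD, hi]
    have hset_rank := ih (by rwa [List.length_set]) hset
    have hrank_lt := primeCodeRank_lt_of_primeCode_lt (primeCode_set_lt (v := k) hi (by omega))
    omega

lemma primeCodeRank_psi (n : ℕ) : primeCodeRank (psi n) = n := by
  classical
  have hmem :=
    Nat.nth_mem_of_infinite (p := (· ∈ Set.range primeCode)) infinite_range_primeCode n
  rw [primeCodeRank, psi, Function.invFun_eq hmem]
  exact Nat.count_nth_of_infinite infinite_range_primeCode n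

/-- Lemma 4.5.(a): for all `n` and `i < n`, `t_n(i) < n - i`. -/
theorem tseq_lt (n i : ℕ) (hi : i < n) : (tseq n).getD i 0 < n - i := by
  rcases lt_or_ge i (psi n).length with h | h
  · rw [tseq, List.getD_append _ _ _ _ h]
    have := getD_add_lt_primeCodeRank h
    rw [primeCodeRank_psi] at this
    omega
  · rw [tseq, List.getD_append_right _ _ _ _ h, List.getD_replicate _ (by omega)]
    omega
end

section
/- Let $\mathbf{\Gamma}$ be a class of sets (in zero-dimensional Polish spaces) closed under finite intersections and continuous preimages, let $X, Y$ be topological spaces, let $\kappa$ be finite, and let $A \in \mathbf{\Gamma}(X \times Y)$ be a union of $\kappa$ rectangles $A = \bigcup_{n<\kappa} A_n \times B_n$ (with arbitrary sides). Then $A$ is a union of at most $2^{2^\kappa}$ rectangles each of whose two sides belongs to $\mathbf{\Gamma}$. -/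
/-!
Any `A ⊆ X × Y` is the union, over its vertical sections `D = A_x`, of the rectangles
`(⋂_{y ∈ D} A^y) × D`. Sections of `A` are continuous preimages of `A`, hence lie in `Γ`. When
`A = ⋃_{n<κ} A_n × B_n`, the section `A_x` is `⋃_{n : x ∈ A_n} B_n` and `A^y` is
`⋃_{n : y ∈ B_n} A_n`, so there are at most `2^κ` sections of either kind; in particular
`⋂_{y ∈ D} A^y` is a finite intersection of members of `Γ`.
-/

universe u

open Set

namespace FiniteInter

variable {α β : Type*} {S : Set (Set α)}

theorem sInter_mem_of_finite (hS : FiniteInter S) {T : Set (Set α)} (hT : T.Finite)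
    (hTS : T ⊆ S) : ⋂₀ T ∈ S := by
  simpa using hS.finiteInter_mem hT.toFinset (by simpa using hTS)

theorem biInter_mem_of_finite_range (hS : FiniteInter S) {f : β → Set α}
    (hf : (range f).Finite) (hfS : ∀ b, f b ∈ S) (t : Set β) : ⋂ b ∈ t, f b ∈ S := by
  rw [← sInter_image]
  exact hS.sInter_mem_of_finite (hf.subset (image_subset_range f t))
    (by rintro _ ⟨b, -, rfl⟩; exact hfS b)

end FiniteInter

namespace Set

variable {ι α β X Y : Type*}

theorem eq_biUnion_range_preimage_prodMk (A : Set (X × Y)) :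
    A = ⋃ D ∈ range (fun x => Prod.mk x ⁻¹' A), (⋂ y ∈ D, (·, y) ⁻¹' A) ×ˢ D := by
  ext ⟨x, y⟩
  simp only [biUnion_range, mem_iUnion, mem_prod, mem_iInter, mem_preimage]
  exact ⟨fun h => ⟨x, fun _ => id, h⟩, fun ⟨_, hC, hD⟩ => hC y hD⟩

theorem preimage_prodMk_iUnion_prod (As : ι → Set X) (Bs : ι → Set Y) (x : X) :
    Prod.mk x ⁻¹' ⋃ n, As n ×ˢ Bs n = ⋃ n ∈ {n | x ∈ As n}, Bs n := by
  ext; simp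

theorem preimage_prodMk_left_iUnion_prod (As : ι → Set X) (Bs : ι → Set Y) (y : Y) :
    (·, y) ⁻¹' ⋃ n, As n ×ˢ Bs n = ⋃ n ∈ {n | y ∈ Bs n}, As n := by
  ext; simp [and_comm]

variable [Fintype ι]

theorem finite_range_biUnion (s : α → Set ι) (Bs : ι → Set β) :
    (range fun a => ⋃ n ∈ s a, Bs n).Finite :=
  (finite_range fun I : Set ι => ⋃ n ∈ I, Bs n).subset
    (range_comp_subset_range s fun I => ⋃ n ∈ I, Bs n)

theorem ncard_range_biUnion_le (s : α → Set ι) (Bs : ι → Set β) :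
    (range fun a => ⋃ n ∈ s a, Bs n).ncard ≤ 2 ^ Fintype.card ι :=
  calc (range fun a => ⋃ n ∈ s a, Bs n).ncard
      ≤ (range fun I : Set ι => ⋃ n ∈ I, Bs n).ncard :=
        ncard_le_ncard (range_comp_subset_range s fun I => ⋃ n ∈ I, Bs n) (finite_range _)
    _ ≤ Nat.card (Set ι) := by rw [← image_univ, ← ncard_univ]; exact ncard_image_le
    _ = 2 ^ Fintype.card ι := by rw [Nat.card_eq_fintype_card, Fintype.card_set]

end Set

/-- Proposition 4.11: if `Γ` is a class of sets closed under finite intersections and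
continuous preimages, and `A ∈ Γ(X × Y)` is a union of `κ` rectangles (`κ` finite), then
`A` is a union of at most `2^(2^κ)` rectangles whose sides are in `Γ`. -/
theorem finite_union_of_rectangles_in_Gamma
    (Γ : ∀ (Z : Type u) [TopologicalSpace Z], Set (Set Z))
    (huniv : ∀ (Z : Type u) [TopologicalSpace Z], (Set.univ : Set Z) ∈ Γ Z)
    (hinter : ∀ (Z : Type u) [TopologicalSpace Z], ∀ S ∈ Γ Z, ∀ T ∈ Γ Z, S ∩ T ∈ Γ Z)
    (hpreim : ∀ (Z W : Type u) [TopologicalSpace Z] [TopologicalSpace W] (f : Z → W),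
      Continuous f → ∀ S ∈ Γ W, f ⁻¹' S ∈ Γ Z)
    (X Y : Type u) [TopologicalSpace X] [TopologicalSpace Y]
    (κ : ℕ) (A : Set (X × Y)) (hA : A ∈ Γ (X × Y))
    (As : Fin κ → Set X) (Bs : Fin κ → Set Y)
    (hAeq : A = ⋃ n, As n ×ˢ Bs n) :
    ∃ (m : ℕ) (C : Fin m → Set X) (D : Fin m → Set Y),
      m ≤ 2 ^ (2 ^ κ) ∧ (∀ j, C j ∈ Γ X) ∧ (∀ j, D j ∈ Γ Y) ∧
      A = ⋃ j, C j ×ˢ D j := by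
  have hΓX : FiniteInter (Γ X) := ⟨huniv X, fun _ hs _ ht => hinter X _ hs _ ht⟩
  have hsecX :
      range (fun x => Prod.mk x ⁻¹' A) = range fun x => ⋃ n ∈ {n | x ∈ As n}, Bs n := by
    simp only [hAeq, preimage_prodMk_iUnion_prod]
  have hsecY : range (fun y => (·, y) ⁻¹' A) = range fun y => ⋃ n ∈ {n | y ∈ Bs n}, As n := by
    simp only [hAeq, preimage_prodMk_left_iUnion_prod]
  obtain ⟨m, D, hD⟩ := (hsecX ▸ finite_range_biUnion _ Bs).fin_embedding
  refine ⟨m, fun j => ⋂ y ∈ D j, (·, y) ⁻¹' A, D, ?_, ?_, ?_, ?_⟩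
  · calc m = (range fun x => Prod.mk x ⁻¹' A).ncard := by
          rw [← hD, ncard_range_of_injective D.injective, Nat.card_fin]
      _ ≤ 2 ^ κ := by
          rw [hsecX]; simpa using ncard_range_biUnion_le (fun x => {n | x ∈ As n}) Bs
      _ ≤ 2 ^ 2 ^ κ := Nat.pow_le_pow_right two_pos Nat.lt_two_pow_self.le
  · exact fun j => hΓX.biInter_mem_of_finite_range (hsecY ▸ finite_range_biUnion _ As)
      (fun y => hpreim X _ _ (.prodMk_left y) A hA) _
  · intro j
    obtain ⟨x, hx⟩ : D j ∈ range fun x => Prod.mk x ⁻¹' A := hD ▸ mem_range_self j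
    exact hx ▸ hpreim Y _ _ (.prodMk_right x) A hA
  · rw [← biUnion_range (f := D) (g := fun D' => (⋂ y ∈ D', (·, y) ⁻¹' A) ×ˢ D'), hD]
    exact eq_biUnion_range_preimage_prodMk A
end

section
/- If a binary relation $A$ on a topological space $X$ is open (as a subset of $X \times X$) and admits a finite coloring $c : X \to k$ (meaning $c(x) \ne c(y)$ whenever $(x,y) \in A$), then $A$ admits a finite coloring $c' : X \to k'$ (for some finite $k'$) such that each color class $c'^{-1}(\{j\})$ is a difference of two closed sets (i.e., is in $D_2(\mathbf{\Pi}^0_1)$). -/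
/-!
Replace each colour class `Cₙ = c⁻¹{n}` by its closure. Since `A` is open, the closure of an
`A`-free square `Cₙ × Cₙ` is still `A`-free, so colouring each point by the least `n` with
`x ∈ closure Cₙ` is again a colouring of `A`, and its classes are
`closure Cⱼ \ ⋃_{m < j} closure Cₘ`.
-/

open Set Topology

theorem disjoint_closure_prod_of_isOpen {X Y : Type*} [TopologicalSpace X]
    [TopologicalSpace Y] {A : Set (X × Y)} (hA : IsOpen A) {s : Set X} {t : Set Y}
    (h : Disjoint (s ×ˢ t) A) : Disjoint (closure s ×ˢ closure t) A := by
  rw [← closure_prod_eq]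
  exact h.closure_left hA

section FirstCover

variable {X ι : Type*} [LinearOrder ι] [WellFoundedLT ι]

noncomputable def firstCover (F : ι → Set X) (hF : ∀ x, ∃ i, x ∈ F i) (x : X) : ι :=
  wellFounded_lt.min {i | x ∈ F i} (hF x)

variable (F : ι → Set X) (hF : ∀ x, ∃ i, x ∈ F i)

theorem mem_firstCover (x : X) : x ∈ F (firstCover F hF x) :=
  wellFounded_lt.min_mem {i | x ∈ F i} (hF x)

theorem firstCover_le {x : X} {i : ι} (hx : x ∈ F i) : firstCover F hF x ≤ i :=
  not_lt.1 (wellFounded_lt.not_lt_min {i | x ∈ F i} hx)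

theorem preimage_firstCover_singleton (j : ι) :
    firstCover F hF ⁻¹' {j} = F j \ ⋃ i < j, F i := by
  ext x
  simp only [mem_preimage, mem_singleton_iff, mem_sdiff, mem_iUnion, not_exists]
  constructor
  · rintro rfl
    exact ⟨mem_firstCover F hF x, fun i hi hx => (firstCover_le F hF hx).not_gt hi⟩
  · rintro ⟨hj, hlt⟩
    exact (firstCover_le F hF hj).antisymm
      (not_lt.1 fun h => hlt _ h (mem_firstCover F hF x))

end FirstCover

/-- An open binary relation with a finite coloring has a finite coloring whose color
classes are differences of two closed sets. -/
theorem open_relation_D2_coloring (X : Type*) [TopologicalSpace X]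
    (A : Set (X × X)) (hA : IsOpen A) (k : ℕ) (c : X → Fin k)
    (hc : ∀ x y, (x, y) ∈ A → c x ≠ c y) :
    ∃ (k' : ℕ) (c' : X → Fin k'),
      (∀ x y, (x, y) ∈ A → c' x ≠ c' y) ∧
      ∀ j : Fin k', ∃ F F' : Set X, IsClosed F ∧ IsClosed F' ∧ c' ⁻¹' {j} = F \ F' := by
  set F : Fin k → Set X := fun n => closure (c ⁻¹' {n})
  have hF : ∀ x, ∃ n, x ∈ F n := fun x => ⟨c x, subset_closure rfl⟩
  have hF_free : ∀ n, Disjoint (F n ×ˢ F n) A := fun n =>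
    disjoint_closure_prod_of_isOpen hA <| disjoint_left.2 fun p ⟨hp₁, hp₂⟩ hpA =>
      hc p.1 p.2 hpA (hp₁.trans hp₂.symm)
  refine ⟨k, firstCover F hF, fun x y hxy hcol => ?_, fun j => ?_⟩
  · have hy : y ∈ F (firstCover F hF x) := hcol ▸ mem_firstCover F hF y
    exact disjoint_left.1 (hF_free _) (mk_mem_prod (mem_firstCover F hF x) hy) hxy
  · exact ⟨F j, ⋃ i < j, F i, isClosed_closure,
      (toFinite _).isClosed_biUnion fun _ _ => isClosed_closure,
      preimage_firstCover_singleton F hF j⟩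
end
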